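/- arXiv:1704.04779 — 2 statements merged into one kernel-verified Lean document; each statement's English description precedes it below -/
import Mathlib

section
/- Let n ≥ 1 be a natural number and c₀, c₁, c₂, c₄ ∈ ℂ. In the polynomial ring ℂ[u,v], the coefficient of the monomial uⁿvⁿ in (c₀·u²v² + c₁·u + c₂·u⁴v⁵ + c₄)ⁿ equals Σ_{m,r ≥ 0, 5m+2r = n} n!/((3m+r)!·r!·(m!)²) · c₀^r·c₁^m·c₂^m·c₄^(3m+r). -/
/-!
Expand the `n`-th power of the four-term sum multinomially. The term with exponent vector `k`
contributes to `uⁿvⁿ` iff `2k₀ + k₁ + 4k₂ = n` and `2k₀ + 5k₂ = n`; together with `k₀ + k₁ + k₂ + k₃ = n` this forces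
`k = (r, m, m, 3m + r)` with `5m + 2r = n`, and the multinomial coefficient of that vector is
`n! / ((3m + r)! r! (m!)²)`.
-/

open MvPolynomial Finset
open scoped Nat

theorem MvPolynomial.coeff_sum_monomial_pow {σ ι R : Type*} [CommSemiring R] [DecidableEq σ]
    [DecidableEq ι] (s : Finset ι) (e : ι → σ →₀ ℕ) (a : ι → R) (n : ℕ) (d : σ →₀ ℕ) :
    coeff d ((∑ i ∈ s, monomial (e i) (a i)) ^ n) =
      ∑ k ∈ s.piAntidiag n with ∑ i ∈ s, k i • e i = d,
        (Nat.multinomial s k : R) * ∏ i ∈ s, a i ^ k i := by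
  rw [sum_pow_eq_sum_piAntidiag, coeff_sum, sum_filter]
  refine sum_congr rfl fun k _ => ?_
  simp only [monomial_pow, ← monomial_sum_prod, ← C_eq_coe_nat, coeff_C_mul, coeff_monomial,
    mul_ite, mul_zero]

theorem Nat.cast_multinomial {ι K : Type*} [Semifield K] [CharZero K] (s : Finset ι)
    (k : ι → ℕ) : (Nat.multinomial s k : K) = (∑ i ∈ s, k i)! / ∏ i ∈ s, ((k i)! : K) := by
  rw [Nat.multinomial, Nat.cast_div (Nat.prod_factorial_dvd_factorial_sum s k)
      (Nat.cast_ne_zero.2 (Nat.prod_factorial_pos s k).ne'),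
    Nat.cast_prod]

/-- Exponents of the monomials of `uv·φ₂ = c₀u²v² + c₁u + c₂u⁴v⁵ + c₄`, where `u = X 0`,
`v = X 1`. -/
noncomputable def phiExponent : Fin 4 → Fin 2 →₀ ℕ :=
  ![Finsupp.single 0 2 + Finsupp.single 1 2, Finsupp.single 0 1,
    Finsupp.single 0 4 + Finsupp.single 1 5, 0]

theorem phi_eq_sum_monomial {R : Type*} [CommSemiring R] (c₀ c₁ c₂ c₄ : R) :
    (C c₀ * X 0 ^ 2 * X 1 ^ 2 + C c₁ * X 0 + C c₂ * X 0 ^ 4 * X 1 ^ 5 + C c₄ :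
      MvPolynomial (Fin 2) R) = ∑ i, monomial (phiExponent i) (![c₀, c₁, c₂, c₄] i) := by
  simp only [Fin.sum_univ_four, phiExponent, Matrix.cons_val, X, C_apply, monomial_pow,
    monomial_mul, Finsupp.smul_single, smul_eq_mul, one_pow, mul_one, zero_add]

theorem sum_smul_phiExponent_eq_iff {k : Fin 4 → ℕ} {a b : ℕ} :
    ∑ i, k i • phiExponent i = Finsupp.single 0 a + Finsupp.single 1 b ↔
      2 * k 0 + k 1 + 4 * k 2 = a ∧ 2 * k 0 + 5 * k 2 = b := by
  simp only [phiExponent, Fin.sum_univ_four, Matrix.cons_val, smul_add, Finsupp.smul_single,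
    smul_eq_mul, mul_one, nsmul_zero, add_zero, Finsupp.ext_iff, Finsupp.coe_add, Pi.add_apply,
    Fin.forall_fin_two, Finsupp.single_eq_same, Finsupp.single_eq_of_ne zero_ne_one,
    Finsupp.single_eq_of_ne one_ne_zero, zero_add]
  omega

theorem filter_piAntidiag_phiExponent (n : ℕ) :
    {k ∈ (univ : Finset (Fin 4)).piAntidiag n |
        ∑ i, k i • phiExponent i = Finsupp.single 0 n + Finsupp.single 1 n} =
      {p ∈ range (n + 1) ×ˢ range (n + 1) | 5 * p.1 + 2 * p.2 = n}.image
        fun p : ℕ × ℕ => ![p.2, p.1, p.1, 3 * p.1 + p.2] := by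
  ext k
  rw [mem_filter, sum_smul_phiExponent_eq_iff]
  simp only [mem_filter, mem_piAntidiag, mem_univ, implies_true, and_true, Fin.sum_univ_four,
    mem_image, mem_product, mem_range, Prod.exists]
  constructor
  · rintro ⟨hsum, hu, hv⟩
    refine ⟨k 2, k 0, ⟨⟨by omega, by omega⟩, by omega⟩, ?_⟩
    funext i
    fin_cases i <;>
      simp only [Fin.zero_eta, Fin.mk_one, Fin.reduceFinMk, Matrix.cons_val] <;> omega
  · rintro ⟨m, r, ⟨-, hmr⟩, rfl⟩
    simp only [Matrix.cons_val]
    omega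

theorem multinomial_mul_prod_pow_phi {K : Type*} [Field K] [CharZero K] (c₀ c₁ c₂ c₄ : K)
    {m r n : ℕ} (h : 5 * m + 2 * r = n) :
    (Nat.multinomial univ ![r, m, m, 3 * m + r] : K) *
        ∏ i, ![c₀, c₁, c₂, c₄] i ^ ![r, m, m, 3 * m + r] i =
      (n ! : K) / (((3 * m + r)! * r ! * (m !) ^ 2 : ℕ) : K) *
        c₀ ^ r * c₁ ^ m * c₂ ^ m * c₄ ^ (3 * m + r) := by
  rw [Nat.cast_multinomial]
  simp only [Fin.sum_univ_four, Fin.prod_univ_four, Matrix.cons_val]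
  rw [show r + m + m + (3 * m + r) = n by omega]
  push_cast
  ring

theorem stmt_3_general (n : ℕ) (c₀ c₁ c₂ c₄ : ℂ) :
    MvPolynomial.coeff (Finsupp.single (0 : Fin 2) n + Finsupp.single (1 : Fin 2) n)
      ((C c₀ * X 0 ^ 2 * X 1 ^ 2 + C c₁ * X 0 + C c₂ * X 0 ^ 4 * X 1 ^ 5 + C c₄ :
          MvPolynomial (Fin 2) ℂ) ^ n) =
    ∑ m ∈ Finset.range (n + 1), ∑ r ∈ Finset.range (n + 1),
      if 5 * m + 2 * r = n then
        (n.factorial : ℂ) /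
            (((3 * m + r).factorial * r.factorial * (m.factorial) ^ 2 : ℕ) : ℂ) *
          c₀ ^ r * c₁ ^ m * c₂ ^ m * c₄ ^ (3 * m + r)
      else 0 := by
  have hinj :
      Function.Injective fun p : ℕ × ℕ => (![p.2, p.1, p.1, 3 * p.1 + p.2] : Fin 4 → ℕ) :=
    fun _ _ h => Prod.ext (congrFun h 1) (congrFun h 0)
  rw [phi_eq_sum_monomial, coeff_sum_monomial_pow, filter_piAntidiag_phiExponent,
    sum_image hinj.injOn, ← sum_product', ← sum_filter]
  exact sum_congr rfl fun p hp => multinomial_mul_prod_pow_phi c₀ c₁ c₂ c₄ (mem_filter.1 hp).2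

theorem stmt_3 (n : ℕ) (hn : 1 ≤ n) (c₀ c₁ c₂ c₄ : ℂ) :
    MvPolynomial.coeff (Finsupp.single (0 : Fin 2) n + Finsupp.single (1 : Fin 2) n)
      ((C c₀ * X 0 ^ 2 * X 1 ^ 2 + C c₁ * X 0 + C c₂ * X 0 ^ 4 * X 1 ^ 5 + C c₄ :
          MvPolynomial (Fin 2) ℂ) ^ n) =
    ∑ m ∈ Finset.range (n + 1), ∑ r ∈ Finset.range (n + 1),
      if 5 * m + 2 * r = n then
        (n.factorial : ℂ) /
            (((3 * m + r).factorial * r.factorial * (m.factorial) ^ 2 : ℕ) : ℂ) *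
          c₀ ^ r * c₁ ^ m * c₂ ^ m * c₄ ^ (3 * m + r)
      else 0 :=
  stmt_3_general n c₀ c₁ c₂ c₄
end

section
/- Let ζ = exp(2πi/5) and φ = (1+√5)/2. Then 2·D₂(ζ) − D₂(ζ²) = 2·D₂(φ·exp(πi/5)). (This is the Bloch–Wigner identity underlying the scissors-congruence computation N₂ ≡ ±10[e^{πi/5}φ] of §6 of the paper, which evaluates the limiting regulator of the coordinate symbol at the second node of the conifold curve.) -/
/-- The dilogarithm Li₂(z) = −∫₀¹ Log(1−z·t)/t dt, with the principal branch Log. -/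
noncomputable def Li2 (z : ℂ) : ℂ :=
  -∫ t in (0 : ℝ)..(1 : ℝ), Complex.log (1 - z * (t : ℂ)) / (t : ℂ)

/-- The Bloch–Wigner function D₂(z) = Im(Li₂(z)) + arg(1−z)·log|z|. -/
noncomputable def D2 (z : ℂ) : ℝ :=
  (Li2 z).im + Complex.arg (1 - z) * Real.log ‖z‖

/-- ζ = exp(2πi/5). -/
noncomputable def ζ5 : ℂ := Complex.exp (2 * Real.pi * Complex.I / 5)

/-- The golden ratio φ = (1+√5)/2, as a complex number. -/
noncomputable def goldφ : ℂ := (((1 + Real.sqrt 5) / 2 : ℝ) : ℂ)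

/-! Differentiating under the integral sign, `Li2` is holomorphic off `[1, ∞)` with
`Li2' z = -log (1 - z) / z`. Two classical functional equations then follow from vanishing
derivatives on connected domains: the reflection `Li2 w + Li2 (1 - w) + log w * log (1 - w)`
is constant on `ℂ \ ((-∞, 0] ∪ [1, ∞))`, and real at `w = 1/2`; and the duplication
`Li2 (z²) = 2 Li2 z + 2 Li2 (-z)` holds on the strip `|Re z| < 1`, both sides vanishing at `0`.
For `D2` these become `D2 (1 - w) = -D2 w` and `D2 (z²) = 2 D2 z + 2 D2 (-z)`. Since
`φ e^{πi/5} = 2 cos (π/5) e^{πi/5} = 1 + ζ`, the identity reads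
`2 D2 ζ - D2 (ζ²) = -2 D2 (-ζ) = 2 D2 (1 + ζ)`. -/

open Complex Set Filter Topology MeasureTheory intervalIntegral

lemma one_sub_mul_mem_slitPlane {z : ℂ} (hz : 1 - z ∈ slitPlane) {t : ℝ}
    (ht : t ∈ Icc (0 : ℝ) 1) : 1 - z * t ∈ slitPlane := by
  convert starConvex_one_slitPlane hz (sub_nonneg.2 ht.2) ht.1 (sub_add_cancel 1 t) using 1
  simp only [real_smul, ofReal_sub, ofReal_one]
  ring

lemma intervalIntegrable_log_one_sub_mul_div {z : ℂ} (hz : 1 - z ∈ slitPlane) :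
    IntervalIntegrable (fun t : ℝ => log (1 - z * t) / t) volume 0 1 := by
  set f : ℝ → ℂ := fun t => log (1 - z * t)
  set S := {t : ℝ | 1 - z * t ∈ slitPlane}
  have hf : ContinuousOn f S := fun t ht =>
    ((continuousAt_clog ht).comp (f := fun t : ℝ => 1 - z * t) (by fun_prop)).continuousWithinAt
  have hd : DifferentiableAt ℝ f 0 :=
    ((((hasDerivAt_id (0 : ℝ)).ofReal_comp.const_mul z).const_sub 1).clog_real
      (by simp)).differentiableAt
  have hS : S ∈ 𝓝 0 := (isOpen_slitPlane.preimage (by fun_prop)).mem_nhds (by simp)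
  have hc : ContinuousOn (dslope f 0) (Icc 0 1) :=
    ((continuousOn_dslope hS).2 ⟨hf, hd⟩).mono fun t ht => one_sub_mul_mem_slitPlane hz ht
  refine (hc.intervalIntegrable_of_Icc zero_le_one).congr fun t ht => ?_
  rw [uIoc_of_le zero_le_one] at ht
  rw [dslope_of_ne _ ht.1.ne', slope_def_module]
  simp [f, div_eq_inv_mul]

/-- The derivative is left as an integral so that the statement also covers `z = 0`, where
`-log (1 - z) / z` takes the junk value `0` instead of `1`. -/
theorem hasDerivAt_Li2 {z : ℂ} (hz : 1 - z ∈ slitPlane) :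
    HasDerivAt Li2 (∫ t in (0 : ℝ)..1, (1 - z * t)⁻¹) z := by
  obtain ⟨ε, hε, hball⟩ : ∃ ε > 0, Metric.closedBall z ε ⊆ {w | 1 - w ∈ slitPlane} :=
    Metric.nhds_basis_closedBall.mem_iff.1
      ((isOpen_slitPlane.preimage (by fun_prop)).mem_nhds hz)
  have hmem : ∀ w ∈ Metric.closedBall z ε, ∀ t ∈ Icc (0 : ℝ) 1, 1 - w * t ∈ slitPlane :=
    fun w hw t ht => one_sub_mul_mem_slitPlane (hball hw) ht
  obtain ⟨C, hC⟩ := ((isCompact_closedBall z ε).prod isCompact_Icc).exists_bound_of_continuousOn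
    (f := fun p : ℂ × ℝ => (1 - p.1 * p.2)⁻¹) <| ContinuousOn.inv₀ (by fun_prop)
      fun p hp => slitPlane_ne_zero (hmem p.1 hp.1 p.2 hp.2)
  have key := hasDerivAt_integral_of_dominated_loc_of_deriv_le (μ := volume) (a := 0) (b := 1)
    (F := fun w (t : ℝ) => log (1 - w * t) / t) (F' := fun w (t : ℝ) => -(1 - w * t)⁻¹)
    (bound := fun _ => C) (Metric.ball_mem_nhds z hε)
    (Eventually.of_forall fun w => (by fun_prop : Measurable _).aestronglyMeasurable)
    (intervalIntegrable_log_one_sub_mul_div hz)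
    (by fun_prop : Measurable _).aestronglyMeasurable ?bound intervalIntegrable_const ?deriv
  · have := key.2.neg
    rwa [intervalIntegral.integral_neg, neg_neg] at this
  case bound =>
    rw [uIoc_of_le zero_le_one]
    refine Eventually.of_forall fun t ht w hw => ?_
    simpa using hC (w, t) ⟨Metric.ball_subset_closedBall hw, Ioc_subset_Icc_self ht⟩
  case deriv =>
    rw [uIoc_of_le zero_le_one]
    refine Eventually.of_forall fun t ht w hw => ?_
    have hw_mem := hmem w (Metric.ball_subset_closedBall hw) t (Ioc_subset_Icc_self ht)
    have ht0 : (t : ℂ) ≠ 0 := ofReal_ne_zero.2 ht.1.ne'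
    refine ((((hasDerivAt_id w).mul_const (t : ℂ)).const_sub 1).clog hw_mem).div_const
      (t : ℂ) |>.congr_deriv ?_
    field_simp [slitPlane_ne_zero hw_mem]
    simp

lemma integral_inv_one_sub_mul {z : ℂ} (hz : 1 - z ∈ slitPlane) (hz0 : z ≠ 0) :
    ∫ t in (0 : ℝ)..1, (1 - z * t)⁻¹ = -log (1 - z) / z := by
  have hderiv : ∀ t ∈ uIcc (0 : ℝ) 1,
      HasDerivAt (fun t : ℝ => -log (1 - z * t) / z) (1 - z * t)⁻¹ t := by
    intro t ht
    rw [uIcc_of_le zero_le_one] at ht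
    have hmem := one_sub_mul_mem_slitPlane hz ht
    refine (((((hasDerivAt_id t).ofReal_comp.const_mul z).const_sub 1).clog_real
      hmem).neg.div_const z).congr_deriv ?_
    field_simp [slitPlane_ne_zero hmem]
    simp
  rw [integral_eq_sub_of_hasDerivAt hderiv]
  · simp
  · refine ContinuousOn.intervalIntegrable (ContinuousOn.inv₀ (by fun_prop) fun t ht => ?_)
    rw [uIcc_of_le zero_le_one] at ht
    exact slitPlane_ne_zero (one_sub_mul_mem_slitPlane hz ht)

theorem hasDerivAt_Li2_of_ne_zero {z : ℂ} (hz : 1 - z ∈ slitPlane) (hz0 : z ≠ 0) :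
    HasDerivAt Li2 (-log (1 - z) / z) z :=
  integral_inv_one_sub_mul hz hz0 ▸ hasDerivAt_Li2 hz

lemma Li2_zero : Li2 0 = 0 := by
  simp [Li2]

lemma Li2_ofReal_im {x : ℝ} (hx : x ≤ 1) : (Li2 x).im = 0 := by
  have hreal : EqOn (fun t : ℝ => log (1 - x * t) / t)
      (fun t : ℝ => ((Real.log (1 - x * t) / t : ℝ) : ℂ)) (uIcc 0 1) := by
    intro t ht
    rw [uIcc_of_le zero_le_one] at ht
    have : 0 ≤ 1 - x * t := by nlinarith [ht.1, ht.2]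
    simp only [ofReal_div, ofReal_log this, ofReal_sub, ofReal_one, ofReal_mul]
  rw [Li2, integral_congr hreal, intervalIntegral.integral_ofReal, neg_im, ofReal_im, neg_zero]

lemma starConvex_half_slitPlane_inter_one_sub :
    StarConvex ℝ ((1 / 2 : ℝ) : ℂ) {w : ℂ | w ∈ slitPlane ∧ 1 - w ∈ slitPlane} := by
  intro w hw a b ha hb hab
  have hstar := starConvex_ofReal_slitPlane (one_half_pos (α := ℝ))
  refine ⟨hstar hw.1 ha hb hab, ?_⟩
  convert hstar hw.2 ha hb hab using 1
  have hab' : (a : ℂ) + b = 1 := by exact_mod_cast hab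
  simp only [real_smul]
  push_cast
  linear_combination -hab'

theorem im_Li2_add_Li2_one_sub {w : ℂ} (hw : w ∈ slitPlane) (hw' : 1 - w ∈ slitPlane) :
    (Li2 w + Li2 (1 - w) + log w * log (1 - w)).im = 0 := by
  set U := {v : ℂ | v ∈ slitPlane ∧ 1 - v ∈ slitPlane}
  set g : ℂ → ℂ := fun v => Li2 v + Li2 (1 - v) + log v * log (1 - v)
  have hU : IsOpen U := isOpen_slitPlane.inter (isOpen_slitPlane.preimage (by fun_prop))
  have hg : ∀ v ∈ U, HasDerivAt g 0 v := by
    rintro v ⟨hv, hv'⟩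
    have hsub := (hasDerivAt_id v).const_sub 1
    have h₁ := hasDerivAt_Li2_of_ne_zero hv' (slitPlane_ne_zero hv)
    have h₂ := (hasDerivAt_Li2_of_ne_zero (by rwa [sub_sub_cancel]) (slitPlane_ne_zero hv')).comp
      v hsub
    refine ((h₁.add h₂).add ((hasDerivAt_log hv).mul (hsub.clog hv'))).congr_deriv ?_
    simp only [sub_sub_cancel, id]
    field_simp [slitPlane_ne_zero hv, slitPlane_ne_zero hv']
    ring
  have hhalf : ((1 / 2 : ℝ) : ℂ) ∈ U := by
    refine ⟨?_, ?_⟩ <;> norm_num [mem_slitPlane_iff]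
  have hconst : g w = g (1 / 2 : ℝ) :=
    hU.is_const_of_deriv_eq_zero
      (starConvex_half_slitPlane_inter_one_sub.isPathConnected hhalf).isConnected.isPreconnected
      (fun v hv => (hg v hv).differentiableAt.differentiableWithinAt)
      (fun v hv => (hg v hv).deriv) ⟨hw, hw'⟩ hhalf
  simp only [g] at hconst
  have hhalf_sub : (1 : ℂ) - ((1 / 2 : ℝ) : ℂ) = ((1 / 2 : ℝ) : ℂ) := by push_cast; norm_num
  rw [hconst, hhalf_sub, ← ofReal_log (by norm_num), ← ofReal_mul, add_im, add_im, ofReal_im,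
    Li2_ofReal_im (by norm_num)]
  norm_num

theorem D2_one_sub {w : ℂ} (hw : w ∈ slitPlane) (hw' : 1 - w ∈ slitPlane) :
    D2 (1 - w) = -D2 w := by
  have h := im_Li2_add_Li2_one_sub hw hw'
  simp only [add_im, mul_im, log_re, log_im] at h
  rw [D2, D2, sub_sub_cancel]
  linarith

lemma one_sub_mem_slitPlane_of_abs_re_lt {z : ℂ} (hz : |z.re| < 1) : 1 - z ∈ slitPlane :=
  mem_slitPlane_iff.2 <| Or.inl <| by simp only [sub_re, one_re]; linarith [(abs_lt.1 hz).2]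

lemma one_sub_sq_mem_slitPlane_of_abs_re_lt {z : ℂ} (hz : |z.re| < 1) :
    1 - z ^ 2 ∈ slitPlane := by
  rw [mem_slitPlane_iff, sq, sub_re, sub_im, mul_re, mul_im, one_re, one_im]
  by_contra! h
  have hre := abs_lt.1 hz
  rcases mul_eq_zero.1 (show z.re * z.im = 0 by linarith [h.2]) with h0 | h0 <;>
    nlinarith [sq_nonneg z.im]

lemma log_one_sub_sq_of_abs_re_lt {z : ℂ} (hz : |z.re| < 1) :
    log (1 - z ^ 2) = log (1 - z) + log (1 - -z) := by
  have hz' : |(-z).re| < 1 := by rwa [neg_re, abs_neg]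
  have harg : ∀ w : ℂ, |w.re| < 1 → |arg (1 - w)| < Real.pi / 2 := fun w hw =>
    abs_arg_lt_pi_div_two_iff.2 <| Or.inl <| by
      simp only [sub_re, one_re]; linarith [(abs_lt.1 hw).2]
  have ha₁ := abs_lt.1 (harg z hz)
  have ha₂ := abs_lt.1 (harg (-z) hz')
  rw [show 1 - z ^ 2 = (1 - z) * (1 - -z) by ring,
    log_mul_eq_add_log_iff (slitPlane_ne_zero (one_sub_mem_slitPlane_of_abs_re_lt hz))
      (slitPlane_ne_zero (one_sub_mem_slitPlane_of_abs_re_lt hz'))]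
  constructor <;> linarith

theorem Li2_sq {z : ℂ} (hz : |z.re| < 1) : Li2 (z ^ 2) = 2 * Li2 z + 2 * Li2 (-z) := by
  set V := {w : ℂ | w.re ∈ Ioo (-1) 1}
  have hV : IsOpen V := isOpen_Ioo.preimage continuous_re
  have hVconv : Convex ℝ V := (convex_Ioo (-1 : ℝ) 1).linear_preimage reLm
  have hmem : ∀ w ∈ V, 1 - w ∈ slitPlane ∧ 1 - -w ∈ slitPlane ∧ 1 - w ^ 2 ∈ slitPlane := by
    intro w hw
    have hw' : |w.re| < 1 := abs_lt.2 hw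
    exact ⟨one_sub_mem_slitPlane_of_abs_re_lt hw',
      one_sub_mem_slitPlane_of_abs_re_lt (by rwa [neg_re, abs_neg]),
      one_sub_sq_mem_slitPlane_of_abs_re_lt hw'⟩
  have hf : ∀ w ∈ V, HasDerivAt (fun z => Li2 (z ^ 2))
      ((∫ t in (0 : ℝ)..1, (1 - w ^ 2 * t)⁻¹) * (2 * w)) w := fun w hw => by
    have h := (hasDerivAt_Li2 (hmem w hw).2.2).comp w (hasDerivAt_pow 2 w)
    rwa [show ((2 : ℕ) : ℂ) * w ^ (2 - 1) = 2 * w by norm_num] at h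
  have hg : ∀ w ∈ V, HasDerivAt (fun z => 2 * Li2 z + 2 * Li2 (-z))
      (2 * (∫ t in (0 : ℝ)..1, (1 - w * t)⁻¹) + 2 * ((∫ t in (0 : ℝ)..1, (1 - -w * t)⁻¹) * -1))
      w := fun w hw =>
    ((hasDerivAt_Li2 (hmem w hw).1).const_mul 2).add
      (((hasDerivAt_Li2 (hmem w hw).2.1).comp w (hasDerivAt_neg w)).const_mul 2)
  refine hV.eqOn_of_deriv_eq hVconv.isPreconnected
    (fun w hw => (hf w hw).differentiableAt.differentiableWithinAt)
    (fun w hw => (hg w hw).differentiableAt.differentiableWithinAt) (fun w hw => ?_)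
    (x := 0) (by simp [V]) (by simp [Li2_zero]) (abs_lt.1 hz)
  rw [(hf w hw).deriv, (hg w hw).deriv]
  rcases eq_or_ne w 0 with rfl | hw0
  · simp
  obtain ⟨h₁, h₂, h₃⟩ := hmem w hw
  rw [integral_inv_one_sub_mul h₁ hw0, integral_inv_one_sub_mul h₂ (neg_ne_zero.2 hw0),
    integral_inv_one_sub_mul h₃ (pow_ne_zero 2 hw0), log_one_sub_sq_of_abs_re_lt (abs_lt.2 hw)]
  field_simp
  ring

theorem D2_sq {z : ℂ} (hz : |z.re| < 1) : D2 (z ^ 2) = 2 * D2 z + 2 * D2 (-z) := by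
  have hLi2 := congrArg im (Li2_sq hz)
  have harg := congrArg im (log_one_sub_sq_of_abs_re_lt hz)
  simp only [add_im, log_im, mul_im, re_ofNat, im_ofNat, zero_mul, add_zero] at hLi2 harg
  rw [D2, D2, D2, norm_pow, Real.log_pow, norm_neg, harg]
  push_cast
  linarith

lemma ζ5_eq : ζ5 = exp ((2 * Real.pi / 5 : ℝ) * I) := by
  rw [ζ5]; push_cast; ring_nf

lemma ζ5_im_pos : 0 < ζ5.im := by
  rw [ζ5_eq, exp_ofReal_mul_I_im]
  exact Real.sin_pos_of_pos_of_lt_pi (by positivity) (by linarith [Real.pi_pos])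

lemma abs_ζ5_re_lt_one : |ζ5.re| < 1 :=
  calc |ζ5.re| < ‖ζ5‖ := abs_re_lt_norm.2 ζ5_im_pos.ne'
    _ = 1 := by rw [ζ5_eq, norm_exp_ofReal_mul_I]

lemma goldφ_mul_exp_eq : goldφ * exp (Real.pi * I / 5) = 1 + ζ5 := by
  have hφ : goldφ = 2 * cos (Real.pi / 5) := by
    rw [goldφ, show (1 + √5) / 2 = 2 * Real.cos (Real.pi / 5) by rw [Real.cos_pi_div_five]; ring]
    push_cast
    rfl
  rw [hφ, two_cos, add_mul, ← exp_add, ← exp_add, ζ5]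
  ring_nf
  rw [exp_zero]
  ring

theorem stmt_10 :
    2 * D2 ζ5 - D2 (ζ5 ^ 2) = 2 * D2 (goldφ * Complex.exp (Real.pi * Complex.I / 5)) := by
  have h₁ : -ζ5 ∈ slitPlane := mem_slitPlane_iff.2 <| Or.inr <| by simp [ζ5_im_pos.ne']
  have h₂ : 1 - -ζ5 ∈ slitPlane := mem_slitPlane_iff.2 <| Or.inr <| by simp [ζ5_im_pos.ne']
  rw [goldφ_mul_exp_eq, ← sub_neg_eq_add 1 ζ5, D2_one_sub h₁ h₂, D2_sq abs_ζ5_re_lt_one]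
  ring
end
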